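/- Let π = ⟨x, y | y x y⁻¹ = x⁻¹⟩ be the Klein bottle group, and let φ: π → π be an endomorphism with φ(x) = x^q and φ(y) = y^r x^ℓ for integers q, r, ℓ. Then GR(φ) = max{|q|, |r|}. -/

import Mathlib

/-
With respect to the generators `x, y` one has `φ^[k] x = x ^ (q ^ k)` and
`φ^[k+1] y = (φ^[k] y) ^ r * x ^ (q ^ k * l)`, so `L_k ≤ C k m ^ k` with `m = max |q| |r|`.
Conversely `|q| ^ k` and `|r| ^ k` are lower bounds for `L_k`: the first is read off in the infinite
dihedral group (where `x` becomes a translation), the second from the exponent sum of `y`.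
Another generating set changes `L_k` only by a bounded factor, and since `L_k` is submultiplicative
a bound `m ^ k ≤ D L_k` improves to `m ^ k ≤ L_k`; hence `inf_k L_k^(1/k) = m`.
-/

open Filter Topology

/-- Word length of `g` with respect to the (symmetrized) generating set `S`. -/
noncomputable def wordLength {G : Type*} [Group G] (S : Set G) (g : G) : ℕ :=
  sInf {n : ℕ | ∃ w : List G, w.length = n ∧ (∀ x ∈ w, x ∈ S ∨ x⁻¹ ∈ S) ∧ w.prod = g}

/-- `L_k(f, S) = max_{s ∈ S} L(f^k(s), S)`. -/
noncomputable def Lk {G : Type*} [Group G] (S : Finset G) (f : G → G) (k : ℕ) : ℕ :=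
  S.sup fun s => wordLength (S : Set G) (f^[k] s)

/-- The growth rate `GR(f) = inf_{k ≥ 1} L_k(f,S)^{1/k}` (which equals
`lim_{k→∞} L_k(f,S)^{1/k}`). -/
noncomputable def GR {G : Type*} [Group G] (S : Finset G) (f : G → G) : ℝ :=
  ⨅ k : ℕ+, (Lk S f k : ℝ) ^ (((k : ℕ) : ℝ))⁻¹

/-- `f` is eventually trivial if some iterate is the trivial endomorphism. -/
def EventuallyTrivial {G : Type*} [Group G] (f : G → G) : Prop :=
  ∃ N : ℕ, 0 < N ∧ ∀ g, f^[N] g = 1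

/-- The single relator `y x y⁻¹ x` of the Klein bottle group `⟨x, y | y x y⁻¹ = x⁻¹⟩`,
with `x` the generator `0` and `y` the generator `1`. -/
def kleinRels : Set (FreeGroup (Fin 2)) :=
  {FreeGroup.of 1 * FreeGroup.of 0 * (FreeGroup.of 1)⁻¹ * FreeGroup.of 0}

/-- The Klein bottle group `π = ⟨x, y | y x y⁻¹ = x⁻¹⟩`. -/
abbrev KleinBottleGroup := PresentedGroup kleinRels

section WordLength

variable {G H : Type*} [Group G] [Group H] {S : Set G}

lemma wordLength_prod_le_length {w : List G} (hw : ∀ x ∈ w, x ∈ S ∨ x⁻¹ ∈ S) :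
    wordLength S w.prod ≤ w.length :=
  Nat.sInf_le ⟨w, rfl, hw, rfl⟩

lemma exists_word_length_eq_wordLength (hS : Subgroup.closure S = ⊤) (g : G) :
    ∃ w : List G, w.length = wordLength S g ∧ (∀ x ∈ w, x ∈ S ∨ x⁻¹ ∈ S) ∧ w.prod = g := by
  have hg : g ∈ Submonoid.closure (S ∪ S⁻¹) := by
    rw [← Subgroup.closure_toSubmonoid, hS]; trivial
  obtain ⟨w, hw, hwg⟩ := Submonoid.exists_list_of_mem_closure hg
  exact Nat.sInf_mem (s := {n | ∃ w : List G, w.length = n ∧ (∀ x ∈ w, x ∈ S ∨ x⁻¹ ∈ S) ∧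
    w.prod = g}) ⟨w.length, w, rfl, hw, hwg⟩

@[simp]
lemma wordLength_one : wordLength S (1 : G) = 0 :=
  Nat.le_zero.mp (wordLength_prod_le_length (w := []) (by simp))

lemma le_mul_wordLength (hS : Subgroup.closure S = ⊤) {ν : G → ℕ} {C : ℕ} (hone : ν 1 = 0)
    (hmul : ∀ a b, ν (a * b) ≤ ν a + ν b) (hletter : ∀ s ∈ S, ν s ≤ C ∧ ν s⁻¹ ≤ C) (g : G) :
    ν g ≤ C * wordLength S g := by
  obtain ⟨w, hlen, hw, rfl⟩ := exists_word_length_eq_wordLength hS g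
  rw [← hlen]
  clear hlen
  induction w with
  | nil => simp [hone]
  | cons a w ih =>
    have ha : ν a ≤ C := by
      rcases hw a (by simp) with h | h
      · exact (hletter a h).1
      · simpa using (hletter _ h).2
    calc ν (a :: w).prod ≤ ν a + ν w.prod := by rw [List.prod_cons]; exact hmul _ _
      _ ≤ C + C * w.length := add_le_add ha (ih fun x hx => hw x (by simp [hx]))
      _ = C * (a :: w).length := by simp [mul_add, add_comm]

lemma wordLength_mul_le (hS : Subgroup.closure S = ⊤) (g h : G) :
    wordLength S (g * h) ≤ wordLength S g + wordLength S h := by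
  obtain ⟨v, hv, hvS, rfl⟩ := exists_word_length_eq_wordLength hS g
  obtain ⟨w, hw, hwS, rfl⟩ := exists_word_length_eq_wordLength hS h
  rw [← hv, ← hw, ← List.length_append, ← List.prod_append]
  exact wordLength_prod_le_length fun x hx => (List.mem_append.mp hx).elim (hvS x) (hwS x)

lemma wordLength_inv_le (hS : Subgroup.closure S = ⊤) (g : G) :
    wordLength S g⁻¹ ≤ wordLength S g := by
  obtain ⟨w, hw, hwS, rfl⟩ := exists_word_length_eq_wordLength hS g
  rw [← hw, List.prod_inv_reverse, ← List.length_reverse,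
    ← List.length_map (f := fun x : G => x⁻¹), ← List.map_reverse]
  refine wordLength_prod_le_length fun x hx => ?_
  obtain ⟨y, hy, rfl⟩ := List.mem_map.mp hx
  rw [List.mem_reverse] at hy
  simpa [or_comm] using hwS y hy

lemma wordLength_zpow_le (hS : Subgroup.closure S = ⊤) (g : G) (n : ℤ) :
    wordLength S (g ^ n) ≤ n.natAbs * wordLength S g := by
  have hpow : ∀ n : ℕ, wordLength S (g ^ n) ≤ n * wordLength S g := by
    intro n
    induction n with
    | zero => simp
    | succ n ih =>
      calc wordLength S (g ^ (n + 1)) ≤ wordLength S (g ^ n) + wordLength S g := by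
            rw [pow_succ]; exact wordLength_mul_le hS _ _
        _ ≤ (n + 1) * wordLength S g := by rw [add_mul, one_mul]; omega
  obtain ⟨n, rfl | rfl⟩ := Int.eq_nat_or_neg n
  · simpa using hpow n
  · simpa using (wordLength_inv_le hS _).trans (hpow n)

lemma wordLength_map_le (hS : Subgroup.closure S = ⊤) {T : Set H}
    (hT : Subgroup.closure T = ⊤) (f : G →* H) {C : ℕ}
    (hC : ∀ s ∈ S, wordLength T (f s) ≤ C) (g : G) :
    wordLength T (f g) ≤ C * wordLength S g :=
  le_mul_wordLength hS (ν := fun g => wordLength T (f g)) (by simp)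
    (fun a b => by simpa using wordLength_mul_le hT (f a) (f b))
    (fun s hs => ⟨hC s hs, by simpa using (wordLength_inv_le hT _).trans (hC s hs)⟩) g

end WordLength

section Lk

variable {G : Type*} [Group G] {S T : Finset G}

lemma wordLength_iterate_le_Lk (φ : G →* G) (k : ℕ) {s : G} (hs : s ∈ S) :
    wordLength (S : Set G) (φ^[k] s) ≤ Lk S φ k :=
  Finset.le_sup (f := fun s => wordLength (S : Set G) (φ^[k] s)) hs

lemma wordLength_iterate_le (hS : Subgroup.closure (S : Set G) = ⊤) (φ : G →* G) (k : ℕ)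
    (g : G) : wordLength (S : Set G) (φ^[k] g) ≤ Lk S φ k * wordLength (S : Set G) g :=
  le_mul_wordLength hS (ν := fun g => wordLength (S : Set G) (φ^[k] g))
    (by simp [iterate_map_one])
    (fun a b => by simpa [iterate_map_mul] using wordLength_mul_le hS _ _)
    (fun s hs => ⟨wordLength_iterate_le_Lk φ k hs, by
      simpa [iterate_map_inv] using (wordLength_inv_le hS _).trans
        (wordLength_iterate_le_Lk φ k hs)⟩) g

lemma Lk_add_le (hS : Subgroup.closure (S : Set G) = ⊤) (φ : G →* G) (i j : ℕ) :
    Lk S φ (i + j) ≤ Lk S φ i * Lk S φ j :=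
  Finset.sup_le fun s hs => by
    rw [Function.iterate_add_apply]
    exact (wordLength_iterate_le hS φ i _).trans
      (Nat.mul_le_mul_left _ (wordLength_iterate_le_Lk φ j hs))

lemma exists_Lk_le_mul_Lk (hS : Subgroup.closure (S : Set G) = ⊤)
    (hT : Subgroup.closure (T : Set G) = ⊤) (φ : G →* G) :
    ∃ D : ℕ, ∀ k, Lk S φ k ≤ D * Lk T φ k := by
  set A := T.sup fun t => wordLength (S : Set G) t
  set B := S.sup fun s => wordLength (T : Set G) s
  refine ⟨A * B, fun k => Finset.sup_le fun s hs => ?_⟩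
  calc wordLength (S : Set G) (φ^[k] s)
      ≤ A * wordLength (T : Set G) (φ^[k] s) :=
        wordLength_map_le hT hS (MonoidHom.id G) (fun t ht => Finset.le_sup (f := fun t =>
          wordLength (S : Set G) t) ht) _
    _ ≤ A * (Lk T φ k * wordLength (T : Set G) s) :=
        Nat.mul_le_mul_left _ (wordLength_iterate_le hT φ k s)
    _ ≤ A * (Lk T φ k * B) :=
        Nat.mul_le_mul_left _ (Nat.mul_le_mul_left _ (Finset.le_sup (f := fun s =>
          wordLength (T : Set G) s) hs))
    _ = A * B * Lk T φ k := by ring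

end Lk

section RootAsymptotics

lemma le_of_forall_pow_le_mul_pow {x y D : ℝ} (hy : 0 ≤ y)
    (h : ∀ n : ℕ, 0 < n → x ^ n ≤ D * y ^ n) : x ≤ y := by
  by_contra! hyx
  have hx : 0 < x := hy.trans_lt hyx
  have hlim : Tendsto (fun n : ℕ => D * (y / x) ^ n) atTop (𝓝 0) := by
    simpa using (tendsto_pow_atTop_nhds_zero_of_lt_one (div_nonneg hy hx.le)
      ((div_lt_one hx).mpr hyx)).const_mul D
  obtain ⟨n, hn, hsmall⟩ :=
    ((eventually_gt_atTop 0).and (hlim.eventually (gt_mem_nhds one_pos))).exists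
  have hbig : 1 ≤ D * (y / x) ^ n := by
    rw [div_pow, mul_div_assoc', le_div_iff₀ (pow_pos hx n), one_mul]
    exact h n hn
  exact hsmall.not_ge hbig

lemma tendsto_mul_natCast_rpow_inv {C : ℝ} (hC : 0 < C) :
    Tendsto (fun k : ℕ => (C * k) ^ (k : ℝ)⁻¹) atTop (𝓝 1) := by
  have hconst : Tendsto (fun k : ℕ => C ^ (k : ℝ)⁻¹) atTop (𝓝 1) := by
    simpa [Function.comp_def] using ((Real.continuousAt_const_rpow hC.ne').tendsto.comp
      (tendsto_inv_atTop_zero.comp tendsto_natCast_atTop_atTop))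
  have hnat : Tendsto (fun k : ℕ => (k : ℝ) ^ (k : ℝ)⁻¹) atTop (𝓝 1) := by
    simpa [one_div, Function.comp_def] using tendsto_rpow_div.comp tendsto_natCast_atTop_atTop
  simpa [Real.mul_rpow hC.le (Nat.cast_nonneg _)] using hconst.mul hnat

variable {a : ℕ → ℝ} {m : ℝ}

/-- Submultiplicativity upgrades `m ^ k ≤ D * a k` to `m ^ k ≤ a k`, via `a (k * n) ≤ a k ^ n`. -/
lemma le_iInf_rpow_inv (hm : 0 ≤ m) (ha : ∀ k, 0 ≤ a k)
    (hsub : ∀ i j, a (i + j) ≤ a i * a j) {D : ℝ} (hlow : ∀ k, m ^ k ≤ D * a k) :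
    m ≤ ⨅ k : ℕ+, a k ^ ((k : ℕ) : ℝ)⁻¹ := by
  have hD : 0 ≤ D := by nlinarith [hlow 0, ha 0]
  refine le_ciInf fun k => ?_
  have hpow : ∀ n, 0 < n → a (k * n) ≤ a k ^ n := by
    intro n hn
    induction n, hn using Nat.le_induction with
    | base => simp
    | succ n _ ih =>
      calc a (k * (n + 1)) ≤ a (k * n) * a k := by rw [mul_add_one]; exact hsub _ _
        _ ≤ a k ^ n * a k := mul_le_mul_of_nonneg_right ih (ha k)
        _ = a k ^ (n + 1) := (pow_succ _ _).symm
  have hmk : m ^ (k : ℕ) ≤ a k := le_of_forall_pow_le_mul_pow (ha k) fun n hn =>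
    calc (m ^ (k : ℕ)) ^ n = m ^ ((k : ℕ) * n) := (pow_mul _ _ _).symm
      _ ≤ D * a (k * n) := hlow _
      _ ≤ D * a k ^ n := mul_le_mul_of_nonneg_left (hpow n hn) hD
  calc m = (m ^ (k : ℕ)) ^ ((k : ℕ) : ℝ)⁻¹ := (Real.pow_rpow_inv_natCast hm k.ne_zero).symm
    _ ≤ a k ^ ((k : ℕ) : ℝ)⁻¹ :=
      Real.rpow_le_rpow (pow_nonneg hm _) hmk (inv_nonneg.mpr (Nat.cast_nonneg _))

lemma iInf_rpow_inv_le (hm : 0 ≤ m) (ha : ∀ k, 0 ≤ a k) {C : ℝ} (hC : 0 < C)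
    (hup : ∀ᶠ k in atTop, a k ≤ C * k * m ^ k) :
    ⨅ k : ℕ+, a k ^ ((k : ℕ) : ℝ)⁻¹ ≤ m := by
  have hbdd : BddBelow (Set.range fun k : ℕ+ => a k ^ ((k : ℕ) : ℝ)⁻¹) :=
    ⟨0, by rintro _ ⟨k, rfl⟩; exact Real.rpow_nonneg (ha k) _⟩
  refine ge_of_tendsto (by simpa using (tendsto_mul_natCast_rpow_inv hC).mul_const m) ?_
  filter_upwards [eventually_gt_atTop 0, hup] with k hk hak
  calc ⨅ k : ℕ+, a k ^ ((k : ℕ) : ℝ)⁻¹ ≤ a k ^ (k : ℝ)⁻¹ := ciInf_le hbdd ⟨k, hk⟩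
    _ ≤ (C * k * m ^ k) ^ (k : ℝ)⁻¹ :=
      Real.rpow_le_rpow (ha k) hak (inv_nonneg.mpr (Nat.cast_nonneg _))
    _ = (C * k) ^ (k : ℝ)⁻¹ * m := by
      rw [Real.mul_rpow (by positivity) (by positivity),
        Real.pow_rpow_inv_natCast hm hk.ne']

end RootAsymptotics

theorem GR_eq_of_pow_le_Lk_le {G : Type*} [Group G] {S T : Finset G}
    (hS : Subgroup.closure (S : Set G) = ⊤) (hT : Subgroup.closure (T : Set G) = ⊤)
    (φ : G →* G) {m C : ℕ} (hC : 0 < C) (hlow : ∀ k, m ^ k ≤ Lk T φ k)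
    (hup : ∀ᶠ k in atTop, Lk T φ k ≤ C * k * m ^ k) :
    GR S φ = m := by
  obtain ⟨D, hST⟩ := exists_Lk_le_mul_Lk hS hT φ
  obtain ⟨D', hTS⟩ := exists_Lk_le_mul_Lk hT hS φ
  have hsub (i j : ℕ) : (Lk S φ (i + j) : ℝ) ≤ Lk S φ i * Lk S φ j := by
    exact_mod_cast Lk_add_le hS φ i j
  refine le_antisymm ?_ ?_
  · refine iInf_rpow_inv_le m.cast_nonneg (fun k => Nat.cast_nonneg _)
      (C := ((D + 1) * C : ℕ)) (by positivity) ?_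
    filter_upwards [hup] with k hk
    have : Lk S φ k ≤ (D + 1) * C * k * m ^ k :=
      calc Lk S φ k ≤ (D + 1) * Lk T φ k := (hST k).trans (Nat.mul_le_mul_right _ D.le_succ)
        _ ≤ (D + 1) * (C * k * m ^ k) := Nat.mul_le_mul_left _ hk
        _ = (D + 1) * C * k * m ^ k := by ring
    exact_mod_cast this
  · refine le_iInf_rpow_inv m.cast_nonneg (fun k => Nat.cast_nonneg _) hsub (D := D')
      fun k => ?_
    exact_mod_cast (hlow k).trans (hTS k)

def DihedralGroup.size : DihedralGroup 0 → ℕ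
  | .r i => Int.natAbs i
  | .sr i => Int.natAbs i

lemma DihedralGroup.size_mul_le (a b : DihedralGroup 0) :
    DihedralGroup.size (a * b) ≤ DihedralGroup.size a + DihedralGroup.size b := by
  cases a <;> cases b <;>
    simp only [DihedralGroup.r_mul_r, DihedralGroup.r_mul_sr, DihedralGroup.sr_mul_r,
      DihedralGroup.sr_mul_sr, DihedralGroup.size] <;> omega

namespace KleinBottleGroup

abbrev x : KleinBottleGroup := PresentedGroup.of 0

abbrev y : KleinBottleGroup := PresentedGroup.of 1

open Classical in
noncomputable def xy : Finset KleinBottleGroup := {x, y}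

lemma coe_xy : (xy : Set KleinBottleGroup) = {x, y} := by
  simp [xy]

lemma mem_xy {g : KleinBottleGroup} : g ∈ xy ↔ g = x ∨ g = y := by
  simp [← Finset.mem_coe, coe_xy]

lemma closure_xy : Subgroup.closure (xy : Set KleinBottleGroup) = ⊤ := by
  rw [← PresentedGroup.closure_range_of kleinRels, coe_xy]
  congr 1
  ext g
  simp [Fin.exists_fin_two, eq_comm]

/-- `x` has order two in the abelianization, so powers of `x` are only detected by a nonabelian
quotient: here `x` becomes the translation `r 1` of the infinite dihedral group. -/
def toDihedral : KleinBottleGroup →* DihedralGroup 0 :=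
  PresentedGroup.toGroup (f := ![.r 1, .sr 0]) (by
    rintro _ rfl
    simp [DihedralGroup.r_mul_r, DihedralGroup.sr_mul_r, DihedralGroup.sr_mul_sr])

def yExponent : KleinBottleGroup →* Multiplicative ℤ :=
  PresentedGroup.toGroup (f := ![1, .ofAdd 1]) (by
    rintro _ rfl
    simp)

lemma wordLength_x_le : wordLength (xy : Set KleinBottleGroup) x ≤ 1 := by
  simpa using wordLength_prod_le_length (S := (xy : Set KleinBottleGroup)) (w := [x])
    (by simp [coe_xy])

lemma wordLength_y_le : wordLength (xy : Set KleinBottleGroup) y ≤ 1 := by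
  simpa using wordLength_prod_le_length (S := (xy : Set KleinBottleGroup)) (w := [y])
    (by simp [coe_xy])

lemma size_toDihedral_le_wordLength (g : KleinBottleGroup) :
    (toDihedral g).size ≤ wordLength (xy : Set KleinBottleGroup) g := by
  simpa using le_mul_wordLength closure_xy (ν := fun g => (toDihedral g).size) (C := 1) rfl
    (fun a b => by simpa using DihedralGroup.size_mul_le _ _)
    (fun s hs => by
      rcases mem_xy.mp hs with rfl | rfl <;>
        simp [toDihedral, DihedralGroup.size, DihedralGroup.inv_r, DihedralGroup.inv_sr]) g

lemma natAbs_yExponent_le_wordLength (g : KleinBottleGroup) :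
    (yExponent g).toAdd.natAbs ≤ wordLength (xy : Set KleinBottleGroup) g := by
  simpa using le_mul_wordLength closure_xy (ν := fun g => (yExponent g).toAdd.natAbs) (C := 1)
    rfl (fun a b => by simpa using Int.natAbs_add_le _ _)
    (fun s hs => by rcases mem_xy.mp hs with rfl | rfl <;> simp [yExponent]) g

variable {q r l : ℤ} {φ : KleinBottleGroup →* KleinBottleGroup}

lemma iterate_x (hx : φ x = x ^ q) (k : ℕ) : φ^[k] x = x ^ (q ^ k) := by
  induction k with
  | zero => simp
  | succ k ih => rw [Function.iterate_succ_apply', ih, map_zpow, hx, ← zpow_mul, pow_succ']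

lemma iterate_succ_y (hx : φ x = x ^ q) (hy : φ y = y ^ r * x ^ l) (k : ℕ) :
    φ^[k + 1] y = (φ^[k] y) ^ r * x ^ (q ^ k * l) := by
  rw [Function.iterate_succ_apply, hy, iterate_map_mul, iterate_map_zpow, iterate_map_zpow,
    iterate_x hx, ← zpow_mul]

lemma yExponent_iterate_y (hx : φ x = x ^ q) (hy : φ y = y ^ r * x ^ l) (k : ℕ) :
    yExponent (φ^[k] y) = .ofAdd (r ^ k) := by
  induction k with
  | zero => simp [yExponent]
  | succ k ih =>
    rw [iterate_succ_y hx hy, map_mul, map_zpow, map_zpow, ih]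
    simp [yExponent, pow_succ]

lemma toDihedral_iterate_x (hx : φ x = x ^ q) (k : ℕ) : toDihedral (φ^[k] x) = .r (q ^ k) := by
  rw [iterate_x hx, map_zpow]
  simp only [toDihedral, PresentedGroup.toGroup.of, Matrix.cons_val_zero,
    DihedralGroup.r_one_zpow]
  rfl

lemma wordLength_iterate_x (hx : φ x = x ^ q) (k : ℕ) :
    wordLength (xy : Set KleinBottleGroup) (φ^[k] x) = q.natAbs ^ k := by
  refine le_antisymm ?_ ?_
  · calc wordLength (xy : Set KleinBottleGroup) (φ^[k] x)
        ≤ (q ^ k).natAbs * wordLength (xy : Set KleinBottleGroup) x := by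
          rw [iterate_x hx]; exact wordLength_zpow_le closure_xy _ _
      _ ≤ q.natAbs ^ k := by
          rw [Int.natAbs_pow]; exact mul_le_of_le_one_right (Nat.zero_le _) wordLength_x_le
  · simpa [toDihedral_iterate_x hx, DihedralGroup.size, Int.natAbs_pow] using
      size_toDihedral_le_wordLength (φ^[k] x)

lemma pow_natAbs_le_wordLength_iterate_y (hx : φ x = x ^ q) (hy : φ y = y ^ r * x ^ l)
    (k : ℕ) : r.natAbs ^ k ≤ wordLength (xy : Set KleinBottleGroup) (φ^[k] y) := by
  simpa [yExponent_iterate_y hx hy, Int.natAbs_pow] using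
    natAbs_yExponent_le_wordLength (φ^[k] y)

lemma wordLength_iterate_succ_y_le (hx : φ x = x ^ q) (hy : φ y = y ^ r * x ^ l) (k : ℕ) :
    wordLength (xy : Set KleinBottleGroup) (φ^[k + 1] y)
      ≤ (r.natAbs + l.natAbs * (k + 1)) * max q.natAbs r.natAbs ^ k := by
  set m := max q.natAbs r.natAbs
  have hq : q.natAbs ≤ m := le_max_left _ _
  have hr : r.natAbs ≤ m := le_max_right _ _
  have hstep (n : ℕ) : wordLength (xy : Set KleinBottleGroup) (φ^[n + 1] y)
      ≤ r.natAbs * wordLength (xy : Set KleinBottleGroup) (φ^[n] y) + l.natAbs * m ^ n := by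
    rw [iterate_succ_y hx hy]
    refine (wordLength_mul_le closure_xy _ _).trans (add_le_add
      (wordLength_zpow_le closure_xy _ _) ?_)
    calc wordLength (xy : Set KleinBottleGroup) (x ^ (q ^ n * l))
        ≤ (q ^ n * l).natAbs * 1 :=
          (wordLength_zpow_le closure_xy _ _).trans (Nat.mul_le_mul_left _ wordLength_x_le)
      _ ≤ l.natAbs * m ^ n := by
          rw [mul_one, Int.natAbs_mul, Int.natAbs_pow, mul_comm]
          exact Nat.mul_le_mul_left _ (Nat.pow_le_pow_left hq n)
  induction k with
  | zero =>
    simpa using (hstep 0).trans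
      (by simpa using mul_le_of_le_one_right (Nat.zero_le r.natAbs) wordLength_y_le)
  | succ k ih =>
    calc wordLength (xy : Set KleinBottleGroup) (φ^[k + 2] y)
        ≤ r.natAbs * ((r.natAbs + l.natAbs * (k + 1)) * m ^ k) + l.natAbs * m ^ (k + 1) :=
          (hstep _).trans (by gcongr)
      _ ≤ m * ((r.natAbs + l.natAbs * (k + 1)) * m ^ k) + l.natAbs * m ^ (k + 1) := by gcongr
      _ = (r.natAbs + l.natAbs * (k + 1 + 1)) * m ^ (k + 1) := by ring

lemma pow_le_Lk_xy (hx : φ x = x ^ q) (hy : φ y = y ^ r * x ^ l) (k : ℕ) :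
    max q.natAbs r.natAbs ^ k ≤ Lk xy φ k := by
  rcases le_total q.natAbs r.natAbs with h | h
  · rw [max_eq_right h]
    exact (pow_natAbs_le_wordLength_iterate_y hx hy k).trans
      (wordLength_iterate_le_Lk φ k (mem_xy.mpr (.inr rfl)))
  · rw [max_eq_left h, ← wordLength_iterate_x hx k]
    exact wordLength_iterate_le_Lk φ k (mem_xy.mpr (.inl rfl))

/-- `2 ≤ k` matters only for `q = r = 0`: then `φ y = x ^ l` may be nontrivial, but `φ^[2] = 1`. -/
lemma Lk_xy_le (hx : φ x = x ^ q) (hy : φ y = y ^ r * x ^ l) {k : ℕ} (hk : 2 ≤ k) :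
    Lk xy φ k ≤ (1 + l.natAbs) * k * max q.natAbs r.natAbs ^ k := by
  obtain ⟨n, rfl⟩ : ∃ n, k = n + 2 := ⟨k - 2, by omega⟩
  set m := max q.natAbs r.natAbs
  have hm : m ^ (n + 1) ≤ m ^ (n + 2) := by
    rcases Nat.eq_zero_or_pos m with h | h
    · simp [h]
    · exact Nat.pow_le_pow_right h (by omega)
  refine Finset.sup_le fun s hs => ?_
  rcases mem_xy.mp hs with rfl | rfl
  · rw [wordLength_iterate_x hx]
    exact (Nat.pow_le_pow_left (le_max_left _ _) _).trans
      (Nat.le_mul_of_pos_left _ (by positivity))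
  · calc wordLength (xy : Set KleinBottleGroup) (φ^[n + 2] y)
        ≤ (r.natAbs + l.natAbs * (n + 2)) * m ^ (n + 1) :=
          wordLength_iterate_succ_y_le hx hy (n + 1)
      _ = r.natAbs * m ^ (n + 1) + l.natAbs * (n + 2) * m ^ (n + 1) := by ring
      _ ≤ m * m ^ (n + 1) + l.natAbs * (n + 2) * m ^ (n + 2) := by
          gcongr
          exact le_max_right _ _
      _ = m ^ (n + 2) + l.natAbs * (n + 2) * m ^ (n + 2) := by ring
      _ ≤ (1 + l.natAbs) * (n + 2) * m ^ (n + 2) := by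
          rw [add_mul, add_mul, one_mul]
          exact Nat.add_le_add_right (Nat.le_mul_of_pos_left _ (by omega)) _

end KleinBottleGroup

/-- For the Klein bottle group `π = ⟨x, y | y x y⁻¹ = x⁻¹⟩` and an
endomorphism `φ` with `φ(x) = x^q`, `φ(y) = y^r x^ℓ`, one has `GR(φ) = max{|q|, |r|}`. -/
theorem GR_kleinBottle (q r l : ℤ) (φ : KleinBottleGroup →* KleinBottleGroup)
    (hx : φ (PresentedGroup.of 0) = PresentedGroup.of 0 ^ q)
    (hy : φ (PresentedGroup.of 1) = PresentedGroup.of 1 ^ r * PresentedGroup.of 0 ^ l)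
    (S : Finset KleinBottleGroup)
    (hS : Subgroup.closure (S : Set KleinBottleGroup) = ⊤) :
    GR S ⇑φ = max |(q : ℝ)| |(r : ℝ)| := by
  rw [GR_eq_of_pow_le_Lk_le hS KleinBottleGroup.closure_xy φ (C := 1 + l.natAbs) (by omega)
    (KleinBottleGroup.pow_le_Lk_xy hx hy)
    ((eventually_ge_atTop 2).mono fun _ hk => KleinBottleGroup.Lk_xy_le hx hy hk)]
  simp [Nat.cast_max, Nat.cast_natAbs]
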